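/- In any partition of the vertex set of the complete multipartite graph G = K_{1^{k1}, 2^{k2}, 3^{k3}, 4^n} into planar-inducing classes, if k elements of the partition have exactly 6 vertices and all classes have at most 6 vertices and the partition has at most n + k2 + k3 + ⌈(k1 - 3k2 - 2k3 - 2n)/4⌉ - 1 classes (assuming k1 + k3 - 2n ≥ 3(k2 + k3)), then a contradiction arises; consequently θ'(K_{1^{k1}, 2^{k2}, 3^{k3}, 4^n}) ≥ n + k2 + k3 + ⌈(k1 + k3 - 2n - 3(k2+k3))/4⌉. -/

import Mathlib

open SimpleGraph

/-- `H` is a minor of `G`: there are nonempty, connected, pairwise disjoint branch sets. -/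
def HasMinor {V W : Type} (G : SimpleGraph V) (H : SimpleGraph W) : Prop :=
  ∃ f : W → Set V,
    (∀ w, (f w).Nonempty) ∧
    (∀ w, (G.induce (f w)).Connected) ∧
    (Pairwise fun w₁ w₂ => Disjoint (f w₁) (f w₂)) ∧
    (∀ w₁ w₂, H.Adj w₁ w₂ → ∃ v₁ ∈ f w₁, ∃ v₂ ∈ f w₂, G.Adj v₁ v₂)

/-- Planarity via Wagner's theorem: no `K₅` minor and no `K₃,₃` minor. -/
def IsPlanar {V : Type} (G : SimpleGraph V) : Prop :=
  ¬ HasMinor G (completeGraph (Fin 5)) ∧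
  ¬ HasMinor G (completeBipartiteGraph (Fin 3) (Fin 3))

/-- The point-thickness: the least `k` such that the vertices can be partitioned into `k`
classes each inducing a planar subgraph. -/
noncomputable def pointThickness {V : Type} (G : SimpleGraph V) : ℕ :=
  sInf {k | ∃ P : V → Fin k, ∀ i, IsPlanar (G.induce {v | P v = i})}

/-- The complete multipartite graph with part sizes `c i`. -/
def KMulti {ι : Type} (c : ι → ℕ) : SimpleGraph (Σ i, Fin (c i)) :=
  completeMultipartiteGraph fun i => Fin (c i)

/-- `G` contains `H` as a subgraph. -/
def ContainsSub {V W : Type} (G : SimpleGraph V) (H : SimpleGraph W) : Prop :=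
  ∃ f : H →g G, Function.Injective f

/-- Part sizes of `K_{1^{k1}, 2^{k2}, 3^{k3}, p 0, …, p (n-1)}`. -/
def sizes (k1 k2 k3 n : ℕ) (p : ℕ → ℕ) : Fin k1 ⊕ Fin k2 ⊕ Fin k3 ⊕ Fin n → ℕ :=
  Sum.elim (fun _ => 1) (Sum.elim (fun _ => 2) (Sum.elim (fun _ => 3) (fun i => p i.1)))

/-- The complete multipartite graph `K_{1^{k1}, 2^{k2}, 3^{k3}, p 0, …, p (n-1)}`. -/
def Gmulti (k1 k2 k3 n : ℕ) (p : ℕ → ℕ) :=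
  KMulti (sizes k1 k2 k3 n p)

/-- The function `N(k₁,k₂)` from the paper (`⌈·⌉`, `⌊·⌋` are ceiling/floor of rationals,
implemented with natural-number division; note `a - 3*b ≥ 0` in the first branch and
`⌊a/3⌋ ≤ b` in the second). -/
def Nfun (a b : ℕ) : ℕ :=
  if 3 * b ≤ a then b + (a - 3 * b + 3) / 4
  else a / 3 + (b - a / 3) / 3 +
    (if a % 3 = 0 ∧ (b - a / 3) % 3 = 0 then 0
     else if a % 3 = 2 ∧ (b - a / 3) % 3 = 2 then 2 else 1)


lemma isPlanar_of_subsingleton {V : Type} (G : SimpleGraph V) (C : Set V)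
    (hC : C.Subsingleton) : IsPlanar (G.induce C) := by
  constructor <;>
  · rintro ⟨f, hne, -, hdisj, -⟩
    · first
      | (obtain ⟨v₀, h₀⟩ := hne (0 : Fin 5)
         obtain ⟨v₁, h₁⟩ := hne (1 : Fin 5)
         have : v₀ = v₁ := Subtype.ext (hC v₀.2 v₁.2)
         exact (hdisj (by decide : (0 : Fin 5) ≠ 1)).ne_of_mem h₀ h₁ this)
      | (obtain ⟨v₀, h₀⟩ := hne (Sum.inl 0)
         obtain ⟨v₁, h₁⟩ := hne (Sum.inr 0)
         have : v₀ = v₁ := Subtype.ext (hC v₀.2 v₁.2)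
         exact (hdisj (by simp : (Sum.inl 0 : Fin 3 ⊕ Fin 3) ≠ Sum.inr 0)).ne_of_mem h₀ h₁ this)

lemma singleton_connected {V : Type} (G : SimpleGraph V) (v : V) :
    (G.induce {v}).Connected := by
  have : Nonempty ({v} : Set V) := ⟨⟨v, rfl⟩⟩
  refine ⟨fun a b => ?_⟩
  have hab : a = b := by
    rcases a with ⟨a, ha⟩; rcases b with ⟨b, hb⟩
    simp only [Set.mem_singleton_iff] at ha hb
    subst ha; subst hb; rfl
  exact hab ▸ Reachable.refl a

lemma hasMinor_of_maps {V W : Type} (G : SimpleGraph V) (H : SimpleGraph W)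
    (g : W → V) (hinj : Function.Injective g)
    (hadj : ∀ w₁ w₂, H.Adj w₁ w₂ → G.Adj (g w₁) (g w₂)) : HasMinor G H := by
  refine ⟨fun w => {g w}, fun w => ⟨g w, rfl⟩, fun w => singleton_connected G (g w),
    fun w₁ w₂ hne => ?_, fun w₁ w₂ h => ⟨g w₁, rfl, g w₂, rfl, hadj _ _ h⟩⟩
  simpa [Set.disjoint_singleton] using fun e => hne (hinj e)

section Claim
variable {ι : Type} [Fintype ι] [DecidableEq ι]

lemma part_card_le (c : ι → ℕ) (D : Finset (Σ i, Fin (c i))) (i₀ : ι) :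
    (D.filter (fun v => v.1 = i₀)).card ≤ c i₀ := by
  have hsub : D.filter (fun v => v.1 = i₀) ⊆ ({i₀} : Finset ι).sigma (fun i => Finset.univ) := by
    intro v hv
    simp only [Finset.mem_filter] at hv
    simp [Finset.mem_sigma, hv.2]
  calc (D.filter (fun v => v.1 = i₀)).card ≤ _ := Finset.card_le_card hsub
    _ = c i₀ := by simp [Finset.card_sigma]

/-- Key per-class bound: a planar class satisfies `∑ ⌈nᵢ/2⌉ ≤ 4`. -/
lemma classClaim (c : ι → ℕ) (hc : ∀ i, c i ≤ 4) (D : Finset (Σ i, Fin (c i)))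
    (hpl : IsPlanar ((KMulti c).induce (↑D : Set (Σ i, Fin (c i))))) :
    ∑ i, ((D.filter (fun v => v.1 = i)).card + 1) / 2 ≤ 4 := by
  by_contra hcon
  push_neg at hcon
  by_cases hbig : ∃ i₀, 3 ≤ (D.filter (fun v => v.1 = i₀)).card
  · obtain ⟨i₀, hi₀⟩ := hbig
    by_cases hoth : 3 ≤ (D.filter (fun v => v.1 ≠ i₀)).card
    · -- K₃,₃ minor
      obtain ⟨t, ht, ht3⟩ := Finset.exists_subset_card_eq hi₀
      obtain ⟨x, y, z, hxy, hxz, hyz, rfl⟩ := Finset.card_eq_three.1 ht3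
      obtain ⟨s, hs, hs3⟩ := Finset.exists_subset_card_eq hoth
      obtain ⟨a, b, d, hab, had, hbd, rfl⟩ := Finset.card_eq_three.1 hs3
      have hx := ht (by simp : x ∈ ({x,y,z} : Finset _))
      have hy := ht (by simp : y ∈ ({x,y,z} : Finset _))
      have hz := ht (by simp : z ∈ ({x,y,z} : Finset _))
      have ha := hs (by simp : a ∈ ({a,b,d} : Finset _))
      have hb := hs (by simp : b ∈ ({a,b,d} : Finset _))
      have hd := hs (by simp : d ∈ ({a,b,d} : Finset _))
      simp only [Finset.mem_filter] at hx hy hz ha hb hd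
      have hLD : ∀ k : Fin 3, (![x,y,z]) k ∈ D ∧ ((![x,y,z]) k).1 = i₀ := by
        intro k; fin_cases k <;> simp [hx, hy, hz]
      have hRD : ∀ k : Fin 3, (![a,b,d]) k ∈ D ∧ ((![a,b,d]) k).1 ≠ i₀ := by
        intro k; fin_cases k <;> simp [ha, hb, hd]
      have hLinj : Function.Injective (![x,y,z]) := by
        intro p q hpq; fin_cases p <;> fin_cases q <;> simp_all
      have hRinj : Function.Injective (![a,b,d]) := by
        intro p q hpq; fin_cases p <;> fin_cases q <;> simp_all
      refine hpl.2 (hasMinor_of_maps _ _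
        (fun w => Sum.elim (fun k => (⟨(![x,y,z]) k, (hLD k).1⟩ : (↑D : Set _)))
          (fun k => ⟨(![a,b,d]) k, (hRD k).1⟩) w) ?_ ?_)
      · rintro (p|p) (q|q) hpq <;>
          simp only [Sum.elim_inl, Sum.elim_inr, Subtype.mk.injEq] at hpq
        · exact congrArg Sum.inl (hLinj hpq)
        · exact absurd (hpq ▸ (hLD p).2) (hRD q).2
        · exact absurd (hpq.symm ▸ (hLD q).2) (hRD p).2
        · exact congrArg Sum.inr (hRinj hpq)
      · rintro (p|p) (q|q) hpq
        · exact absurd hpq (by simp)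
        · show (KMulti c).Adj ((![x,y,z]) p) ((![a,b,d]) q)
          show ((![x,y,z]) p).1 ≠ ((![a,b,d]) q).1
          rw [(hLD p).2]; exact fun e => (hRD q).2 e.symm
        · show (KMulti c).Adj ((![a,b,d]) p) ((![x,y,z]) q)
          show ((![a,b,d]) p).1 ≠ ((![x,y,z]) q).1
          rw [(hLD q).2]; exact (hRD p).2
        · exact absurd hpq (by simp)
    · -- counting contradiction
      push_neg at hoth
      have herase : ∑ i ∈ Finset.univ.erase i₀, (D.filter (fun v => v.1 = i)).card ≤ 2 := by
        have hfib : (D.filter (fun v => v.1 ≠ i₀)).card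
            = ∑ i ∈ Finset.univ.erase i₀,
              ((D.filter (fun v => v.1 ≠ i₀)).filter (fun v => v.1 = i)).card := by
          apply Finset.card_eq_sum_card_fiberwise
          intro v hv
          simp only [Finset.mem_coe, Finset.mem_filter] at hv
          simp [hv.2]
        have heq : ∀ i ∈ Finset.univ.erase i₀,
            ((D.filter (fun v => v.1 ≠ i₀)).filter (fun v => v.1 = i)).card
            = (D.filter (fun v => v.1 = i)).card := by
          intro i hi
          rw [Finset.filter_filter]
          congr 1
          apply Finset.filter_congr
          intro v _
          simp only [Finset.mem_erase] at hi
          constructor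
          · exact fun h => h.2
          · exact fun h => ⟨h ▸ hi.1, h⟩
        calc ∑ i ∈ Finset.univ.erase i₀, (D.filter (fun v => v.1 = i)).card
            = ∑ i ∈ Finset.univ.erase i₀,
              ((D.filter (fun v => v.1 ≠ i₀)).filter (fun v => v.1 = i)).card :=
              (Finset.sum_congr rfl heq).symm
          _ = (D.filter (fun v => v.1 ≠ i₀)).card := hfib.symm
          _ ≤ 2 := Nat.lt_succ_iff.mp hoth
      have h4 : (D.filter (fun v => v.1 = i₀)).card ≤ 4 := (part_card_le c D i₀).trans (hc i₀)
      have hsum : ∑ i, ((D.filter (fun v => v.1 = i)).card + 1) / 2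
          = ((D.filter (fun v => v.1 = i₀)).card + 1) / 2
            + ∑ i ∈ Finset.univ.erase i₀, ((D.filter (fun v => v.1 = i)).card + 1) / 2 :=
        (Finset.add_sum_erase _ _ (Finset.mem_univ i₀)).symm
      have hterm : ∑ i ∈ Finset.univ.erase i₀, ((D.filter (fun v => v.1 = i)).card + 1) / 2
          ≤ ∑ i ∈ Finset.univ.erase i₀, (D.filter (fun v => v.1 = i)).card := by
        apply Finset.sum_le_sum
        intro i _
        omega
      omega
  · -- all parts ≤ 2 inside class: get 5 distinct parts, K₅
    push_neg at hbig
    have h1 : ∑ i, ((D.filter (fun v => v.1 = i)).card + 1) / 2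
        = ∑ i ∈ Finset.univ.filter (fun i => 1 ≤ (D.filter (fun v => v.1 = i)).card),
            ((D.filter (fun v => v.1 = i)).card + 1) / 2 := by
      rw [← Finset.sum_filter_add_sum_filter_not Finset.univ
        (fun i => 1 ≤ (D.filter (fun v => v.1 = i)).card)]
      have hz : ∑ i ∈ Finset.univ.filter
          (fun i => ¬ 1 ≤ (D.filter (fun v => v.1 = i)).card),
          ((D.filter (fun v => v.1 = i)).card + 1) / 2 = 0 := by
        apply Finset.sum_eq_zero
        intro i hi
        simp only [Finset.mem_filter, not_le, Nat.lt_one_iff] at hi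
        rw [hi.2]
        rfl
      omega
    have h2 : ∑ i ∈ Finset.univ.filter (fun i => 1 ≤ (D.filter (fun v => v.1 = i)).card),
        ((D.filter (fun v => v.1 = i)).card + 1) / 2
        ≤ (Finset.univ.filter (fun i => 1 ≤ (D.filter (fun v => v.1 = i)).card)).card := by
      have := Finset.sum_le_card_nsmul
        (Finset.univ.filter (fun i => 1 ≤ (D.filter (fun v => v.1 = i)).card))
        (fun i => ((D.filter (fun v => v.1 = i)).card + 1) / 2) 1
        (fun i _ => by
          have h3 := hbig i
          show ((D.filter (fun v => v.1 = i)).card + 1) / 2 ≤ 1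
          omega)
      simpa using this
    have hTcard : 5 ≤
        (Finset.univ.filter (fun i => 1 ≤ (D.filter (fun v => v.1 = i)).card)).card := by
      omega
    obtain ⟨t, htT, ht5⟩ := Finset.exists_subset_card_eq hTcard
    have hch : ∀ i : {x // x ∈ t}, ∃ v, v ∈ D ∧ v.1 = (i : ι) := by
      rintro ⟨i, hi⟩
      have hmem := htT hi
      simp only [Finset.mem_filter] at hmem
      obtain ⟨v, hv⟩ := Finset.card_pos.mp hmem.2
      simp only [Finset.mem_filter] at hv
      exact ⟨v, hv.1, hv.2⟩
    choose vf hvD hvfst using hch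
    have einj := (Finset.equivFinOfCardEq ht5).symm.injective
    refine hpl.1 (hasMinor_of_maps _ _
      (fun k => ⟨vf ((Finset.equivFinOfCardEq ht5).symm k),
        hvD ((Finset.equivFinOfCardEq ht5).symm k)⟩) ?_ ?_)
    · intro k k' hkk
      simp only [Subtype.mk.injEq] at hkk
      have hfst : (((Finset.equivFinOfCardEq ht5).symm k : {x // x ∈ t}) : ι)
          = (((Finset.equivFinOfCardEq ht5).symm k' : {x // x ∈ t}) : ι) := by
        rw [← hvfst ((Finset.equivFinOfCardEq ht5).symm k),
          ← hvfst ((Finset.equivFinOfCardEq ht5).symm k'), hkk]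
      exact einj (Subtype.ext hfst)
    · intro k k' hkk
      have hne : k ≠ k' := hkk
      show (KMulti c).Adj (vf ((Finset.equivFinOfCardEq ht5).symm k))
        (vf ((Finset.equivFinOfCardEq ht5).symm k'))
      show (vf ((Finset.equivFinOfCardEq ht5).symm k)).1
        ≠ (vf ((Finset.equivFinOfCardEq ht5).symm k')).1
      rw [hvfst, hvfst]
      intro hcontra
      exact hne (einj (Subtype.ext hcontra))

lemma part_card_eq (c : ι → ℕ) (i₀ : ι) :
    ((Finset.univ : Finset (Σ i, Fin (c i))).filter (fun v => v.1 = i₀)).card = c i₀ := by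
  have : (Finset.univ : Finset (Σ i, Fin (c i))).filter (fun v => v.1 = i₀)
      = ({i₀} : Finset ι).sigma (fun i => Finset.univ) := by
    ext v
    simp [Finset.mem_sigma, eq_comm]
  rw [this]
  simp [Finset.card_sigma]

lemma sum_div_two_le {β : Type} (s : Finset β) (a : β → ℕ) :
    ∑ j ∈ s, a j / 2 ≤ (∑ j ∈ s, a j) / 2 := by
  rw [Nat.le_div_iff_mul_le (by norm_num : 0 < 2), Finset.sum_mul]
  exact Finset.sum_le_sum fun j _ => Nat.div_mul_le_self _ _

/-- Double counting over a planar partition. -/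
lemma main_count (c : ι → ℕ) (hc : ∀ i, c i ≤ 4) (m : ℕ) (P : (Σ i, Fin (c i)) → Fin m)
    (hP : ∀ j, IsPlanar ((KMulti c).induce
      (↑(Finset.univ.filter (fun v => P v = j)) : Set (Σ i, Fin (c i))))) :
    ∑ i, c i ≤ 4 * m + ∑ i, (c i) / 2 := by
  classical
  set D : Fin m → Finset (Σ i, Fin (c i)) := fun j => Finset.univ.filter (fun v => P v = j)
    with hD
  have h1 : ∑ i, c i = ∑ j, (D j).card := by
    have h0 : (Finset.univ : Finset (Σ i, Fin (c i))).card = ∑ j, (D j).card :=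
      Finset.card_eq_sum_card_fiberwise (fun x _ => Finset.mem_univ (P x))
    rw [← h0]
    simp [Finset.card_univ]
  have h2 : ∀ j, (D j).card = ∑ i, ((D j).filter (fun v => v.1 = i)).card := fun j =>
    Finset.card_eq_sum_card_fiberwise (fun x _ => Finset.mem_univ x.1)
  have h3 : ∀ j, (D j).card ≤ (∑ i, ((D j).filter (fun v => v.1 = i)).card / 2) + 4 := by
    intro j
    have hcl := classClaim c hc (D j) (hP j)
    have : (D j).card = ∑ i, (((D j).filter (fun v => v.1 = i)).card / 2
        + (((D j).filter (fun v => v.1 = i)).card + 1) / 2) := by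
      rw [h2 j]
      exact Finset.sum_congr rfl fun i _ => by omega
    rw [this, Finset.sum_add_distrib]
    omega
  have h5 : ∀ i : ι, ∑ j, ((D j).filter (fun v => v.1 = i)).card = c i := by
    intro i
    have h0 : ((Finset.univ : Finset (Σ i, Fin (c i))).filter (fun v => v.1 = i)).card
        = ∑ j, (((Finset.univ : Finset (Σ i, Fin (c i))).filter
            (fun v => v.1 = i)).filter (fun v => P v = j)).card :=
      Finset.card_eq_sum_card_fiberwise (fun x _ => Finset.mem_univ (P x))
    have heq : ∀ j, (((Finset.univ : Finset (Σ i, Fin (c i))).filter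
        (fun v => v.1 = i)).filter (fun v => P v = j))
        = ((D j).filter (fun v => v.1 = i)) := by
      intro j
      rw [hD]
      rw [Finset.filter_filter, Finset.filter_filter]
      exact Finset.filter_congr fun v _ => and_comm
    rw [← part_card_eq c i, h0]
    exact Finset.sum_congr rfl fun j _ => by rw [heq j]
  calc ∑ i, c i = ∑ j, (D j).card := h1
    _ ≤ ∑ j : Fin m, ((∑ i, ((D j).filter (fun v => v.1 = i)).card / 2) + 4) :=
        Finset.sum_le_sum fun j _ => h3 j
    _ = (∑ j : Fin m, ∑ i, ((D j).filter (fun v => v.1 = i)).card / 2) + 4 * m := by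
        rw [Finset.sum_add_distrib]
        simp [mul_comm]
    _ = (∑ i, ∑ j : Fin m, ((D j).filter (fun v => v.1 = i)).card / 2) + 4 * m := by
        rw [Finset.sum_comm]
    _ ≤ (∑ i, (∑ j : Fin m, ((D j).filter (fun v => v.1 = i)).card) / 2) + 4 * m := by
        gcongr with i hi
        exact sum_div_two_le _ _
    _ = (∑ i, (c i) / 2) + 4 * m := by
        congr 1
        exact Finset.sum_congr rfl fun i _ => by rw [h5 i]
    _ = 4 * m + ∑ i, (c i) / 2 := by ring

end Claim

lemma sizes_le (k1 k2 k3 n : ℕ) : ∀ i, sizes k1 k2 k3 n (fun _ => 4) i ≤ 4 := by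
  rintro (i | i | i | i) <;> simp [sizes]

lemma sum_sizes (k1 k2 k3 n : ℕ) :
    ∑ i, sizes k1 k2 k3 n (fun _ => 4) i = k1 + 2 * k2 + 3 * k3 + 4 * n := by
  simp [sizes, Fintype.sum_sum_type, Finset.sum_const, mul_comm]
  ring

lemma sum_sizes_div (k1 k2 k3 n : ℕ) :
    ∑ i, (sizes k1 k2 k3 n (fun _ => 4) i) / 2 = k2 + k3 + 2 * n := by
  simp [sizes, Fintype.sum_sum_type, Finset.sum_const, mul_comm]
  ring

lemma key (k1 k2 k3 n : ℕ) (m : ℕ)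
    (P : (Σ i, Fin (sizes k1 k2 k3 n (fun _ => 4) i)) → Fin m)
    (hpl : ∀ j, IsPlanar ((Gmulti k1 k2 k3 n (fun _ => 4)).induce {v | P v = j})) :
    k1 + 2 * k2 + 3 * k3 + 4 * n ≤ 4 * m + (k2 + k3 + 2 * n) := by
  classical
  have hset : ∀ j, ({v | P v = j} : Set (Σ i, Fin (sizes k1 k2 k3 n (fun _ => 4) i)))
      = ↑(Finset.univ.filter (fun v => P v = j)) := by
    intro j; ext v; simp
  have hpl' : ∀ j, IsPlanar ((KMulti (sizes k1 k2 k3 n (fun _ => 4))).induce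
      (↑(Finset.univ.filter (fun v => P v = j)) :
        Set (Σ i, Fin (sizes k1 k2 k3 n (fun _ => 4) i)))) := by
    intro j
    have := hpl j
    rw [hset j] at this
    exact this
  have := main_count (sizes k1 k2 k3 n (fun _ => 4)) (sizes_le k1 k2 k3 n) m P hpl'
  rw [sum_sizes, sum_sizes_div] at this
  omega

/-- Claim 1 in Lemma 2.3: assume `k1 + k3 - 2n ≥ 3(k2 + k3)` (and so `k1 + k3 ≥ 2n`).  In any
partition of the vertices of `G₁ = K_{1^{k1},2^{k2},3^{k3},4^n}` into planar-inducing classes in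
which `k` classes have exactly 6 vertices and all classes have at most 6 vertices, having at most
`n + k2 + k3 + ⌈(k1 - 3k2 - 2k3 - 2n)/4⌉ - 1` classes yields a contradiction; consequently
`θ'(G₁) ≥ n + k2 + k3 + ⌈(k1 + k3 - 2n - 3(k2 + k3))/4⌉`. -/
theorem stmt11 (k1 k2 k3 n : ℕ)
    (h : 3 * (k2 + k3) + 2 * n ≤ k1 + k3) :
    (∀ (m k : ℕ) (P : (Σ i, Fin (sizes k1 k2 k3 n (fun _ => 4) i)) → Fin m),
      (∀ i, IsPlanar ((Gmulti k1 k2 k3 n (fun _ => 4)).induce {v | P v = i})) →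
      (∀ i, ({v | P v = i} : Set (Σ i, Fin (sizes k1 k2 k3 n (fun _ => 4) i))).ncard ≤ 6) →
      ({i | ({v | P v = i} : Set (Σ i, Fin (sizes k1 k2 k3 n (fun _ => 4) i))).ncard = 6} :
        Set (Fin m)).ncard = k →
      m + 1 ≤ n + k2 + k3 + (k1 + k3 - 2 * n - 3 * (k2 + k3) + 3) / 4 → False) ∧
    n + k2 + k3 + (k1 + k3 - 2 * n - 3 * (k2 + k3) + 3) / 4 ≤
      pointThickness (Gmulti k1 k2 k3 n (fun _ => 4)) := by
  constructor
  · intro m k P hpl _ _ hle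
    have := key k1 k2 k3 n m P hpl
    omega
  · rw [pointThickness]
    apply le_csInf
    · refine ⟨Fintype.card (Σ i, Fin (sizes k1 k2 k3 n (fun _ => 4) i)),
        Fintype.equivFin _, fun j => ?_⟩
      apply isPlanar_of_subsingleton
      intro a ha b hb
      exact (Fintype.equivFin _).injective (ha.trans hb.symm)
    · rintro b ⟨P, hP⟩
      have := key k1 k2 k3 n b P hP
      omega
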